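/- arXiv:2309.13808 — 2 statements merged into one kernel-verified Lean document; each statement's English description precedes it below -/
import Mathlib

section
/- (Invariant Preservation) Let σ be a valid non-initial composite state of the asynchronous muddy-children protocol, with muddy set M = ⋃_i Obs(σ_i) and N = |M|. Then for every component i with running state σ_i = ⟨Obs_i, r_i, status_i⟩: if status_i = u then r_i < |Obs_i| and |Obs_i| ≤ N; if status_i = m then r_i = N − 1 = |Obs_i|; and if status_i = c then r_i = N = |Obs_i|. -/
/-- Epistemic status of a child: unknown, muddy, or clean. -/
inductive Status : Type
  | u | m | c

/-- A message ⟨j, r, status⟩. -/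
structure Msg (n : ℕ) : Type where
  sender : Fin n
  round : ℕ
  status : Status

/-- A child's state: initial ⟨Obs⟩ or running ⟨Obs, r, status⟩. -/
inductive ChildState (n : ℕ) : Type
  | start (Obs : Finset (Fin n))
  | run (Obs : Finset (Fin n)) (r : ℕ) (st : Status)

open Status ChildState

/-- Observation set of a child state. -/
def ChildState.obs {n : ℕ} : ChildState n → Finset (Fin n)
  | .start O => O
  | .run O _ _ => O

/-- A composite state. -/
abbrev CState (n : ℕ) := Fin n → ChildState n

/-- The set M of muddy children determined by a composite state. -/
def muddySet {n : ℕ} (σ : CState n) : Finset (Fin n) :=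
  Finset.univ.biUnion fun i => (σ i).obs

/-- consistent(σ): M nonempty and every child sees exactly M \ {i}. -/
def consistent {n : ℕ} (σ : CState n) : Prop :=
  (muddySet σ).Nonempty ∧ ∀ i, (σ i).obs = muddySet σ \ {i}

/-- The constrained local transitions of child `i` (labels init/emit/receive). -/
inductive LocalStep {n : ℕ} (i : Fin n) :
    ChildState n → Option (Msg n) → ChildState n → Option (Msg n) → Prop
  | init_nonempty (O : Finset (Fin n)) (h : O ≠ ∅) :
      LocalStep i (start O) none (run O 0 u) none
  | init_empty (O : Finset (Fin n)) (h : O = ∅) :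
      LocalStep i (start O) none (run O 0 m) none
  | emit (O : Finset (Fin n)) (r : ℕ) (s : Status) :
      LocalStep i (run O r s) none (run O r s) (some ⟨i, r, s⟩)
  | recv_decided (O : Finset (Fin n)) (r : ℕ) (s : Status) (mg : Msg n) (h : s ≠ u) :
      LocalStep i (run O r s) (some mg) (run O r s) none
  | recv_c_eq (O : Finset (Fin n)) (r : ℕ) (j : Fin n) (r' : ℕ)
      (hj : j ∉ O) (hr : r' = O.card) :
      LocalStep i (run O r u) (some ⟨j, r', c⟩) (run O r' c) none
  | recv_c_succ (O : Finset (Fin n)) (r : ℕ) (j : Fin n) (r' : ℕ)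
      (hj : j ∉ O) (hr : r' = O.card + 1) :
      LocalStep i (run O r u) (some ⟨j, r', c⟩) (run O (r' - 1) m) none
  | recv_m_eq (O : Finset (Fin n)) (r : ℕ) (j : Fin n) (r' : ℕ)
      (hj : j ∈ O) (hr : r' = O.card) :
      LocalStep i (run O r u) (some ⟨j, r', m⟩) (run O r' m) none
  | recv_m_pred (O : Finset (Fin n)) (r : ℕ) (j : Fin n) (r' : ℕ)
      (hj : j ∈ O) (hr : r' = O.card - 1) :
      LocalStep i (run O r u) (some ⟨j, r', m⟩) (run O (r' + 1) c) none
  | recv_u_in_lt (O : Finset (Fin n)) (r : ℕ) (j : Fin n) (r' : ℕ)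
      (hj : j ∈ O) (hr : r' < r) :
      LocalStep i (run O r u) (some ⟨j, r', u⟩) (run O r u) none
  | recv_u_in_mid (O : Finset (Fin n)) (r : ℕ) (j : Fin n) (r' : ℕ)
      (hj : j ∈ O) (h1 : r ≤ r') (h2 : r' < O.card - 1) :
      LocalStep i (run O r u) (some ⟨j, r', u⟩) (run O (r' + 1) u) none
  | recv_u_in_top (O : Finset (Fin n)) (r : ℕ) (j : Fin n) (r' : ℕ)
      (hj : j ∈ O) (hr : r' = O.card - 1) :
      LocalStep i (run O r u) (some ⟨j, r', u⟩) (run O (r' + 1) m) none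
  | recv_u_out_le (O : Finset (Fin n)) (r : ℕ) (j : Fin n) (r' : ℕ)
      (hj : j ∉ O) (hr : r' ≤ r) :
      LocalStep i (run O r u) (some ⟨j, r', u⟩) (run O r u) none
  | recv_u_out_mid (O : Finset (Fin n)) (r : ℕ) (j : Fin n) (r' : ℕ)
      (hj : j ∉ O) (h1 : r < r') (h2 : r' < O.card) :
      LocalStep i (run O r u) (some ⟨j, r', u⟩) (run O r' u) none
  | recv_u_out_top (O : Finset (Fin n)) (r : ℕ) (j : Fin n) (r' : ℕ)
      (hj : j ∉ O) (hr : r' = O.card) :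
      LocalStep i (run O r u) (some ⟨j, r', u⟩) (run O r' m) none

/-- The no-equivocation condition on an input message: the sender must be in a
running state matching the message (or a state strictly ahead of an unknown-status message). -/
def senderOK {n : ℕ} (σ : CState n) (mg : Msg n) : Prop :=
  ∃ (O : Finset (Fin n)) (rj : ℕ) (sj : Status),
    σ mg.sender = run O rj sj ∧
      ((mg.status = sj ∧ mg.round = rj) ∨ (mg.status = u ∧ mg.round < rj))

/-- The composition constraint: init transitions require consistency of the
composite state, receives require the no-equivocation condition. -/
def stepConstraint {n : ℕ} (σ : CState n) (i : Fin n) (inp : Option (Msg n)) : Prop :=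
  ((∃ O, σ i = start O) → consistent σ) ∧ ∀ mg, inp = some mg → senderOK σ mg

/-- Constrained transitions of the composite system: component `i` takes a local
transition, subject to the composition constraint. -/
inductive CStep {n : ℕ} :
    CState n → Fin n → Option (Msg n) → CState n → Option (Msg n) → Prop
  | mk (σ : CState n) (i : Fin n) (inp : Option (Msg n)) (s' : ChildState n)
      (out : Option (Msg n))
      (hl : LocalStep i (σ i) inp s' out) (hc : stepConstraint σ i inp) :
      CStep σ i inp (Function.update σ i s') out

/-- A recorded transition: acting component, input message, output message. -/
abbrev Transition (n : ℕ) := Fin n × Option (Msg n) × Option (Msg n)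

/-- A composite state is initial when all components are in initial states. -/
def isInitial {n : ℕ} (σ : CState n) : Prop := ∀ i, ∃ O, σ i = start O

/-- The trace `tr` emits the message `mg`. -/
def emits {n : ℕ} (tr : List (Transition n)) (mg : Msg n) : Prop :=
  ∃ i inp, (i, inp, some mg) ∈ tr

/-- The message `mg` is an input of some transition of the trace `tr`. -/
def isInput {n : ℕ} (tr : List (Transition n)) (mg : Msg n) : Prop :=
  ∃ i out, (i, some mg, out) ∈ tr

/-- Constrained traces: sequences of constrained transitions from `σ0`. -/
inductive ConstrainedTrace {n : ℕ} (σ0 : CState n) :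
    List (Transition n) → CState n → Prop
  | nil : ConstrainedTrace σ0 [] σ0
  | snoc (tr : List (Transition n)) (σ : CState n) (i : Fin n)
      (inp : Option (Msg n)) (σ' : CState n) (out : Option (Msg n))
      (htr : ConstrainedTrace σ0 tr σ)
      (hstep : CStep σ i inp σ' out) :
      ConstrainedTrace σ0 (tr ++ [(i, inp, out)]) σ'

/-- Valid messages from the initial composite state `σ0`: messages emitted by a
constrained trace from `σ0` all of whose input messages are themselves valid,
i.e., emitted by valid traces from `σ0`. -/
inductive ValidMsg {n : ℕ} (σ0 : CState n) : Msg n → Prop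
  | intro (mg : Msg n) (tr : List (Transition n)) (σ : CState n)
      (h0 : isInitial σ0)
      (hct : ConstrainedTrace σ0 tr σ)
      (hin : ∀ mg', isInput tr mg' → ValidMsg σ0 mg')
      (hem : emits tr mg) : ValidMsg σ0 mg

/-- Valid traces from `σ0`: constrained traces from an initial composite state
in which every input message can be emitted by some valid trace from `σ0`. -/
def ValidTrace {n : ℕ} (σ0 : CState n) (tr : List (Transition n)) (σ : CState n) : Prop :=
  isInitial σ0 ∧ ConstrainedTrace σ0 tr σ ∧ ∀ mg, isInput tr mg → ValidMsg σ0 mg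

/-- Status of a running child state. -/
def ChildState.status? {n : ℕ} : ChildState n → Option Status
  | .start _ => none
  | .run _ _ s => some s

/-- A composite state is final when every component knows its status. -/
def isFinal {n : ℕ} (σ : CState n) : Prop :=
  ∀ i, ∃ (O : Finset (Fin n)) (r : ℕ) (s : Status), σ i = run O r s ∧ s ≠ u

/-- Round of a child state, with initial states at round -1. -/
def roundZ {n : ℕ} : ChildState n → ℤ
  | .start _ => -1
  | .run _ r _ => (r : ℤ)

/-!
The per-child claim, together with consistency of the observation sets (every child `i`
sees `M \ {i}`), is an inductive invariant of constrained traces; validity of messages is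
not needed, because the no-equivocation constraint lets a receiver read off the invariant
of the sender's current state. The only delicate transitions are the receipts of an
unknown-status message at the top round: comparing its round with `|Obs_j| = N - [j ∈ M]`
forces the receiver itself to be muddy, so that `|Obs_i| = N - 1`.
-/

section

variable {n : ℕ}

def ChildInv (N : ℕ) : ChildState n → Prop
  | start _ => True
  | run O r u => r < O.card ∧ O.card ≤ N
  | run O r m => r = N - 1 ∧ N - 1 = O.card
  | run O r c => r = N ∧ N = O.card

-- Initial states need not be consistent: consistency is only enforced by the first `init`.
def ProtocolInv (σ : CState n) : Prop :=
  (¬ isInitial σ → consistent σ) ∧ ∀ k, ChildInv (muddySet σ).card (σ k)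

theorem ChildInv.run_u_of_lt {N r r' : ℕ} {O : Finset (Fin n)} {s : Status}
    (h : ChildInv N (run O r s)) (hr : r' < r) : ChildInv N (run O r' u) := by
  cases s <;> simp only [ChildInv] at h ⊢ <;> omega

theorem childInv_of_senderOK {N : ℕ} {σ : CState n} {mg : Msg n}
    (hinv : ∀ k, ChildInv N (σ k)) (h : senderOK σ mg) :
    ChildInv N (run (σ mg.sender).obs mg.round mg.status) := by
  obtain ⟨O, rj, sj, hσj, hmatch⟩ := h
  have hj := hinv mg.sender
  rw [hσj] at hj ⊢
  rcases hmatch with ⟨hs, hr⟩ | ⟨hs, hr⟩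
  · rwa [hs, hr]
  · rw [hs]
    exact hj.run_u_of_lt hr

theorem mem_muddySet_of_mem_obs {σ : CState n} {i j : Fin n} (h : j ∈ (σ i).obs) :
    j ∈ muddySet σ :=
  Finset.mem_biUnion.2 ⟨i, Finset.mem_univ i, h⟩

theorem card_obs_le_card_muddySet (σ : CState n) (i : Fin n) :
    (σ i).obs.card ≤ (muddySet σ).card :=
  Finset.card_le_card fun _ => mem_muddySet_of_mem_obs

theorem muddySet_congr {σ σ' : CState n} (h : ∀ k, (σ' k).obs = (σ k).obs) :
    muddySet σ' = muddySet σ :=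
  Finset.biUnion_congr rfl fun k _ => h k

theorem consistent_congr {σ σ' : CState n} (h : ∀ k, (σ' k).obs = (σ k).obs)
    (hσ : consistent σ) : consistent σ' := by
  simpa only [consistent, muddySet_congr h, h] using hσ

namespace consistent

variable {σ : CState n}

theorem card_obs_add_one (hσ : consistent σ) {k : Fin n} (hk : k ∈ muddySet σ) :
    (σ k).obs.card + 1 = (muddySet σ).card := by
  rw [hσ.2 k, Finset.sdiff_singleton_eq_erase, Finset.card_erase_add_one hk]

theorem card_obs_of_notMem (hσ : consistent σ) {k : Fin n} (hk : k ∉ muddySet σ) :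
    (σ k).obs.card = (muddySet σ).card := by
  rw [hσ.2 k, Finset.sdiff_singleton_eq_erase, Finset.erase_eq_of_notMem hk]

theorem mem_of_card_obs_lt (hσ : consistent σ) {k : Fin n}
    (hk : (σ k).obs.card < (muddySet σ).card) : k ∈ muddySet σ := by
  by_contra h
  exact hk.ne (hσ.card_obs_of_notMem h)

end consistent

theorem LocalStep.obs_eq {i : Fin n} {s s' : ChildState n} {inp out : Option (Msg n)}
    (h : LocalStep i s inp s' out) : s'.obs = s.obs := by
  cases h <;> rfl

theorem LocalStep.obs_update_eq {σ : CState n} {i : Fin n} {s' : ChildState n}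
    {inp out : Option (Msg n)} (h : LocalStep i (σ i) inp s' out) (k : Fin n) :
    (Function.update σ i s' k).obs = (σ k).obs := by
  rcases eq_or_ne k i with rfl | hk
  · rw [Function.update_self, h.obs_eq]
  · rw [Function.update_of_ne hk]

theorem LocalStep.childInv {σ : CState n} {i : Fin n} {inp out : Option (Msg n)}
    {s' : ChildState n} (hσ : consistent σ) (hinv : ∀ k, ChildInv (muddySet σ).card (σ k))
    (hsend : ∀ mg, inp = some mg → senderOK σ mg) (hl : LocalStep i (σ i) inp s' out) :
    ChildInv (muddySet σ).card s' := by
  have hmsg mg (h : inp = some mg) := childInv_of_senderOK hinv (hsend mg h)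
  have hM_pos : 0 < (muddySet σ).card := Finset.card_pos.2 hσ.1
  have hi := hinv i
  have hi_sub : (σ i).obs ⊆ muddySet σ := fun _ => mem_muddySet_of_mem_obs
  have hi_muddy :
      (σ i).obs.card < (muddySet σ).card → (σ i).obs.card + 1 = (muddySet σ).card :=
    fun h => hσ.card_obs_add_one (hσ.mem_of_card_obs_lt h)
  generalize σ i = si at hl hi hi_sub hi_muddy
  cases hl with
  | init_nonempty O hO =>
    exact ⟨Finset.card_pos.2 (Finset.nonempty_of_ne_empty hO), Finset.card_le_card hi_sub⟩
  | init_empty O hO =>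
    simp only [ChildState.obs, ChildInv, hO, Finset.card_empty] at hi_muddy ⊢
    omega
  | emit | recv_decided | recv_u_in_lt | recv_u_out_le => exact hi
  | recv_c_eq | recv_c_succ | recv_m_eq =>
    have := hmsg _ rfl
    simp only [ChildInv] at this ⊢
    omega
  | recv_m_pred O r j r' hj =>
    have := hmsg _ rfl
    have hO_pos : 0 < O.card := Finset.card_pos.2 ⟨j, hj⟩
    simp only [ChildInv] at this ⊢
    omega
  | recv_u_in_mid | recv_u_out_mid =>
    simp only [ChildInv] at hi ⊢
    omega
  | recv_u_in_top O r j r' hj =>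
    have hr'_lt : r' < (σ j).obs.card := (hmsg _ rfl).1
    have hj_card := hσ.card_obs_add_one (hi_sub hj)
    have hO_pos : 0 < O.card := Finset.card_pos.2 ⟨j, hj⟩
    simp only [ChildState.obs, ChildInv] at hi_muddy ⊢
    omega
  | recv_u_out_top O r j r' hj =>
    have hr'_lt : r' < (σ j).obs.card := (hmsg _ rfl).1
    have hj_le := card_obs_le_card_muddySet σ j
    simp only [ChildState.obs, ChildInv] at hi_muddy ⊢
    omega

theorem protocolInv_of_isInitial {σ : CState n} (h : isInitial σ) : ProtocolInv σ := by
  refine ⟨fun h' => absurd h h', fun k => ?_⟩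
  obtain ⟨O, hO⟩ := h k
  rw [hO]
  trivial

theorem CStep.protocolInv {σ σ' : CState n} {i : Fin n} {inp out : Option (Msg n)}
    (hstep : CStep σ i inp σ' out) (h : ProtocolInv σ) : ProtocolInv σ' := by
  cases hstep with | mk s' _ hl hc =>
  have hσ : consistent σ := by
    cases hσi : σ i with
    | start O => exact hc.1 ⟨O, hσi⟩
    | run O r s =>
      refine h.1 fun h0 => ?_
      obtain ⟨O', hO'⟩ := h0 i
      rw [hσi] at hO'
      cases hO'
  refine ⟨fun _ => consistent_congr hl.obs_update_eq hσ, fun k => ?_⟩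
  rw [muddySet_congr hl.obs_update_eq]
  rcases eq_or_ne k i with rfl | hk
  · rw [Function.update_self]
    exact hl.childInv hσ h.2 hc.2
  · rw [Function.update_of_ne hk]
    exact h.2 k

theorem ConstrainedTrace.protocolInv {σ0 σ : CState n} {tr : List (Transition n)}
    (h0 : isInitial σ0) (htr : ConstrainedTrace σ0 tr σ) : ProtocolInv σ := by
  induction htr with
  | nil => exact protocolInv_of_isInitial h0
  | snoc _ _ _ _ _ _ _ hstep ih => exact hstep.protocolInv ih

end

theorem muddy_invariant_preservation_general (n : ℕ)
    (σ0 σ : CState n) (tr : List (Transition n))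
    (htr : ValidTrace σ0 tr σ)
    (N : ℕ) (hN : N = (muddySet σ).card) :
    ∀ (i : Fin n) (O : Finset (Fin n)) (r : ℕ) (s : Status),
      σ i = ChildState.run O r s →
        (s = Status.u → r < O.card ∧ O.card ≤ N) ∧
        (s = Status.m → r = N - 1 ∧ N - 1 = O.card) ∧
        (s = Status.c → r = N ∧ N = O.card) := by
  intro i O r s hi
  have hinv := (htr.2.1.protocolInv htr.1).2 i
  rw [hi, ← hN] at hinv
  cases s <;> simp only [ChildInv] at hinv <;> simp [hinv]

/-- Invariant Preservation: in every valid non-initial composite state, a child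
with unknown status has round below the number of muddy children it sees (and
sees at most N muddy children), a child that knows it is muddy has round
N − 1 = |Obs|, and a child that knows it is clean has round N = |Obs|. -/
theorem muddy_invariant_preservation (n : ℕ) (hn : 1 ≤ n)
    (σ0 σ : CState n) (tr : List (Transition n))
    (htr : ValidTrace σ0 tr σ) (hni : ¬ isInitial σ)
    (N : ℕ) (hN : N = (muddySet σ).card) :
    ∀ (i : Fin n) (O : Finset (Fin n)) (r : ℕ) (s : Status),
      σ i = ChildState.run O r s →
        (s = Status.u → r < O.card ∧ O.card ≤ N) ∧
        (s = Status.m → r = N - 1 ∧ N - 1 = O.card) ∧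
        (s = Status.c → r = N ∧ N = O.card) :=
  muddy_invariant_preservation_general n σ0 σ tr htr N hN
end

section
/- Define T_0 := {s : muddy(s) ≥ 1} and T_{j+1} := U(T_j). Let s be a state with exactly k muddy children, k ≥ 1. Then in T_{k−1}: every muddy child i (s i = true) knows their own status at s relative to T_{k−1} (every t ∈ T_{k−1} with t ~_i s has t i = true), while every clean child i (s i = false) does not know their own status at s relative to T_{k−1}. Hence at round k exactly the muddy children answer "Yes". -/
/-- Indistinguishability for child i: the two states agree everywhere except
possibly at i. -/
def ksim (n : ℕ) (i : Fin n) (s t : Fin n → Bool) : Prop :=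
  ∀ j : Fin n, j ≠ i → s j = t j

/-- Child i knows their own status at s relative to the set of states T. -/
def knows (n : ℕ) (T : Set (Fin n → Bool)) (i : Fin n) (s : Fin n → Bool) : Prop :=
  ∀ t ∈ T, ksim n i s t → t i = s i

/-- The announcement-update of T: states of T at which no child knows their
own status relative to T. -/
def announceUpdate (n : ℕ) (T : Set (Fin n → Bool)) : Set (Fin n → Bool) :=
  {s ∈ T | ∀ i : Fin n, ¬ knows n T i s}

/-- The number of muddy children in state s. -/
def muddy (n : ℕ) (s : Fin n → Bool) : ℕ :=
  (Finset.univ.filter fun i : Fin n => s i = true).card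

lemma muddy_update_true {n : ℕ} {s : Fin n → Bool} {i : Fin n} (h : s i = false) :
    muddy n (Function.update s i true) = muddy n s + 1 := by
  unfold muddy
  have : (Finset.univ.filter fun j : Fin n => Function.update s i true j = true)
      = insert i (Finset.univ.filter fun j : Fin n => s j = true) := by
    ext j
    by_cases hj : j = i <;> simp [Function.update, hj]
  rw [this, Finset.card_insert_of_notMem (by simp [h])]

lemma muddy_update_false {n : ℕ} {s : Fin n → Bool} {i : Fin n} (h : s i = true) :
    muddy n (Function.update s i false) + 1 = muddy n s := by
  unfold muddy
  have : (Finset.univ.filter fun j : Fin n => Function.update s i false j = true)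
      = (Finset.univ.filter fun j : Fin n => s j = true).erase i := by
    ext j
    by_cases hj : j = i <;> simp [Function.update, hj]
  rw [this, Finset.card_erase_add_one (by simp [h])]

lemma ksim_update {n : ℕ} (i : Fin n) (s : Fin n → Bool) (b : Bool) :
    ksim n i s (Function.update s i b) := by
  intro j hj; simp [Function.update, hj]

lemma eq_update_of_ksim {n : ℕ} {i : Fin n} {s t : Fin n → Bool}
    (h : ksim n i s t) : t = Function.update s i (t i) := by
  funext j
  by_cases hj : j = i
  · subst hj; simp
  · simp [Function.update, hj, (h j hj).symm]

lemma T_eq {n : ℕ} (T : ℕ → Set (Fin n → Bool))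
    (h0 : T 0 = {s | 1 ≤ muddy n s})
    (hS : ∀ j : ℕ, T (j + 1) = announceUpdate n (T j)) :
    ∀ j : ℕ, T j = {s | j + 1 ≤ muddy n s} := by
  intro j
  induction j with
  | zero => simpa using h0
  | succ j ih =>
    rw [hS j, ih]
    ext s
    constructor
    · rintro ⟨hsT, hnk⟩
      by_contra hlt
      simp only [Set.mem_setOf_eq, not_le] at hlt
      have hsT' : j + 1 ≤ muddy n s := hsT
      have hm : muddy n s = j + 1 := by omega
      -- there is a muddy child
      have hne : (Finset.univ.filter fun i : Fin n => s i = true).Nonempty := by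
        rw [← Finset.card_pos]; unfold muddy at hm; omega
      obtain ⟨i, hi⟩ := hne
      simp only [Finset.mem_filter] at hi
      apply hnk i
      intro t ht hsim
      have := eq_update_of_ksim hsim
      cases hb : t i with
      | true => rw [hi.2]
      | false =>
        exfalso
        rw [hb] at this
        have hmt : muddy n t + 1 = muddy n s := by rw [this]; exact muddy_update_false hi.2
        have : j + 1 ≤ muddy n t := ht
        omega
    · intro hle
      refine ⟨by simp only [Set.mem_setOf_eq] at hle ⊢; omega, ?_⟩
      intro i hknow
      cases hb : s i with
      | true =>
        have ht : Function.update s i false ∈ {u | j + 1 ≤ muddy n u} := by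
          have := muddy_update_false (s := s) (i := i) hb
          simp only [Set.mem_setOf_eq] at hle ⊢; omega
        have := hknow _ ht (ksim_update i s false)
        simp [hb] at this
      | false =>
        have ht : Function.update s i true ∈ {u | j + 1 ≤ muddy n u} := by
          have := muddy_update_true (s := s) (i := i) hb
          simp only [Set.mem_setOf_eq] at hle ⊢; omega
        have := hknow _ ht (ksim_update i s true)
        simp [hb] at this

/-- In a state with exactly k ≥ 1 muddy children, relative to T (k−1) every
muddy child knows their own status while every clean child does not; hence at
round k exactly the muddy children answer "Yes". -/
theorem muddy_children_answer_at_round_k (n : ℕ) (T : ℕ → Set (Fin n → Bool))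
    (h0 : T 0 = {s | 1 ≤ muddy n s})
    (hS : ∀ j : ℕ, T (j + 1) = announceUpdate n (T j))
    (s : Fin n → Bool) (k : ℕ) (hk : 1 ≤ k) (hs : muddy n s = k) :
    (∀ i : Fin n, s i = true → knows n (T (k - 1)) i s) ∧
    (∀ i : Fin n, s i = false → ¬ knows n (T (k - 1)) i s) := by
  have hT : T (k - 1) = {u | k ≤ muddy n u} := by
    rw [T_eq T h0 hS (k - 1)]
    have : k - 1 + 1 = k := by omega
    rw [this]
  rw [hT]
  constructor
  · intro i hi t ht hsim
    have heq := eq_update_of_ksim hsim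
    cases hb : t i with
    | true => rw [hi]
    | false =>
      exfalso
      rw [hb] at heq
      have hmt : muddy n t + 1 = muddy n s := by rw [heq]; exact muddy_update_false hi
      have : k ≤ muddy n t := ht
      omega
  · intro i hi hknow
    have ht : Function.update s i true ∈ {u | k ≤ muddy n u} := by
      have := muddy_update_true (s := s) (i := i) hi
      simp only [Set.mem_setOf_eq]; omega
    have := hknow _ ht (ksim_update i s true)
    simp [hi] at this
end
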